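/- For every Łukasiewicz path L of length n there exists a Motzkin path M of length n such that the consecutive pattern DU (a down step (1,−1) immediately followed by an up step (1,1)) occurs at exactly the same set of positions in L and in M. -/

import Mathlib

/-- A Łukasiewicz path: vertical step components, each `≥ -1`, all partial sums
nonnegative, total sum `0`. -/
def IsLukas (w : List ℤ) : Prop :=
  (∀ s ∈ w, -1 ≤ s) ∧ (∀ k, 0 ≤ (w.take k).sum) ∧ w.sum = 0

/-- A Motzkin path: a Łukasiewicz path using only steps `(1,1)`, `(1,0)`, `(1,-1)`. -/
def IsMotzkin (w : List ℤ) : Prop :=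
  IsLukas w ∧ ∀ s ∈ w, s ≤ 1

/-!
A `DU` of a Łukasiewicz path `L` at `j` is a valley after `j + 1` steps. Take the Motzkin path
whose height is `0` at both ends and at the valleys of `L`, and `1` everywhere else. Its `DU`s
sit exactly at the isolated zeros of the height strictly inside the path, so it suffices that
the valleys of `L` are pairwise non-adjacent (a step cannot be both `1` and `-1`) and avoid
positions `1` and `n - 1`: a Łukasiewicz path neither starts with a down step nor ends with
an up step.
-/

def DU (w : List ℤ) (j : ℕ) : Prop :=
  w[j]? = some (-1) ∧ w[j + 1]? = some 1

instance (w : List ℤ) (j : ℕ) : Decidable (DU w j) :=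
  inferInstanceAs (Decidable (_ ∧ _))

theorem DU.not_DU_succ {w : List ℤ} {j : ℕ} (h : DU w j) : ¬DU w (j + 1) := by
  intro h'
  have := h.2.symm.trans h'.1
  simp at this

theorem IsLukas.not_DU_zero {w : List ℤ} (hw : IsLukas w) : ¬DU w 0 := by
  rintro ⟨h0, -⟩
  cases w with
  | nil => simp at h0
  | cons a t =>
    have := hw.2.1 1
    simp_all

theorem IsLukas.add_two_lt_length_of_DU {w : List ℤ} (hw : IsLukas w) {j : ℕ} (h : DU w j) :
    j + 2 < w.length := by
  obtain ⟨hj, hval⟩ := List.getElem?_eq_some_iff.1 h.2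
  refine lt_of_le_of_ne hj fun hlen => ?_
  have hsplit := List.sum_take_succ w (j + 1) hj
  rw [List.take_of_length_le hlen.ge, hw.2.2, hval] at hsplit
  have := hw.2.1 (j + 1)
  omega

def pathOfHeights (h : ℕ → ℤ) (n : ℕ) : List ℤ :=
  (List.range n).map fun j => h (j + 1) - h j

@[simp]
theorem length_pathOfHeights (h : ℕ → ℤ) (n : ℕ) : (pathOfHeights h n).length = n := by
  simp [pathOfHeights]

theorem getElem?_pathOfHeights (h : ℕ → ℤ) {n j : ℕ} (hj : j < n) :
    (pathOfHeights h n)[j]? = some (h (j + 1) - h j) := by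
  simp [pathOfHeights, hj]

theorem sum_take_pathOfHeights (h : ℕ → ℤ) (n k : ℕ) :
    ((pathOfHeights h n).take k).sum = h (min k n) - h 0 := by
  rw [pathOfHeights, ← List.map_take, List.take_range]
  induction min k n with
  | zero => simp
  | succ m ih => simp [List.range_succ, ih]

theorem isMotzkin_pathOfHeights {h : ℕ → ℤ} {n : ℕ} (h0 : h 0 = 0) (hn : h n = 0)
    (hnonneg : ∀ j ≤ n, 0 ≤ h j) (hstep : ∀ j < n, |h (j + 1) - h j| ≤ 1) :
    IsMotzkin (pathOfHeights h n) := by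
  have hsteps : ∀ s ∈ pathOfHeights h n, -1 ≤ s ∧ s ≤ 1 := by
    simp only [pathOfHeights, List.mem_map, List.mem_range]
    rintro _ ⟨j, hj, rfl⟩
    exact abs_le.1 (hstep j hj)
  refine ⟨⟨fun s hs => (hsteps s hs).1, fun k => ?_, ?_⟩, fun s hs => (hsteps s hs).2⟩
  · rw [sum_take_pathOfHeights, h0, sub_zero]
    exact hnonneg _ (min_le_right k n)
  · rw [← List.take_length (l := pathOfHeights h n), sum_take_pathOfHeights,
      length_pathOfHeights, min_self, h0, hn, sub_zero]

theorem DU_pathOfHeights_iff (h : ℕ → ℤ) (n j : ℕ) :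
    DU (pathOfHeights h n) j ↔ j + 2 ≤ n ∧ h (j + 1) - h j = -1 ∧ h (j + 2) - h (j + 1) = 1 := by
  by_cases hj : j + 2 ≤ n
  · simp [DU, getElem?_pathOfHeights h (show j < n by omega),
      getElem?_pathOfHeights h (show j + 1 < n by omega), hj]
  · simp only [hj, false_and, iff_false, DU, not_and]
    intro _ h1
    have := (List.getElem?_eq_some_iff.1 h1).1
    simp at this; omega

def valleyHeight (w : List ℤ) : ℕ → ℤ
  | 0 => 0
  | j + 1 => if j + 1 = w.length ∨ DU w j then 0 else 1

theorem valleyHeight_eq_zero_or_eq_one (w : List ℤ) (k : ℕ) :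
    valleyHeight w k = 0 ∨ valleyHeight w k = 1 := by
  cases k with
  | zero => exact Or.inl rfl
  | succ j => simp only [valleyHeight]; split_ifs <;> simp

theorem valleyHeight_length (w : List ℤ) : valleyHeight w w.length = 0 := by
  cases h : w.length with
  | zero => rfl
  | succ m => simp [valleyHeight, ← h]

theorem valleyHeight_succ_eq_zero_iff (w : List ℤ) (j : ℕ) :
    valleyHeight w (j + 1) = 0 ↔ j + 1 = w.length ∨ DU w j := by
  simp [valleyHeight, or_iff_not_imp_left]

theorem IsLukas.valleyHeight_eq_one_of_DU {w : List ℤ} (hw : IsLukas w) {j : ℕ} (h : DU w j) :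
    valleyHeight w j = 1 ∧ valleyHeight w (j + 2) = 1 := by
  have hlt := hw.add_two_lt_length_of_DU h
  refine ⟨?_, ?_⟩
  · cases j with
    | zero => exact absurd h hw.not_DU_zero
    | succ i =>
      have hi : ¬DU w i := fun hi => hi.not_DU_succ h
      simp only [valleyHeight, hi, or_false]
      rw [if_neg (by omega)]
  · simp only [valleyHeight, h.not_DU_succ, or_false]
    rw [if_neg (by omega)]

theorem IsLukas.DU_iff_DU_pathOfHeights_valleyHeight {w : List ℤ} (hw : IsLukas w) (j : ℕ) :
    DU w j ↔ DU (pathOfHeights (valleyHeight w) w.length) j := by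
  rw [DU_pathOfHeights_iff]
  constructor
  · intro h
    have hvalley := (valleyHeight_succ_eq_zero_iff w j).2 (Or.inr h)
    obtain ⟨hj, hj2⟩ := hw.valleyHeight_eq_one_of_DU h
    exact ⟨(hw.add_two_lt_length_of_DU h).le, by omega, by omega⟩
  · rintro ⟨hlen, hdown, -⟩
    have hvalley : valleyHeight w (j + 1) = 0 := by
      have := valleyHeight_eq_zero_or_eq_one w j
      have := valleyHeight_eq_zero_or_eq_one w (j + 1)
      omega
    exact ((valleyHeight_succ_eq_zero_iff w j).1 hvalley).resolve_left (by omega)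

theorem exists_motzkin_DU_equiv (L : List ℤ) (hL : IsLukas L) :
    ∃ M : List ℤ, IsMotzkin M ∧ M.length = L.length ∧
      ∀ j : ℕ, (L[j]? = some (-1) ∧ L[j + 1]? = some 1) ↔
        (M[j]? = some (-1) ∧ M[j + 1]? = some 1) := by
  have h01 := valleyHeight_eq_zero_or_eq_one L
  refine ⟨pathOfHeights (valleyHeight L) L.length, ?_, length_pathOfHeights _ _,
    hL.DU_iff_DU_pathOfHeights_valleyHeight⟩
  refine isMotzkin_pathOfHeights rfl (valleyHeight_length L)
    (fun k _ => by have := h01 k; omega) fun j _ => ?_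
  have := h01 j; have := h01 (j + 1)
  rw [abs_le]; omega
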